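/- arXiv:1302.3498 — 9 statements merged into one kernel-verified Lean document; each statement's English description precedes it below -/
import Mathlib

section
/- Let G = C_n(D) and H = C_m(F) be circulant graphs. Then the lexicographic product G[H] is isomorphic to the circulant C_{nm}(T), where T = ⋃_{j=0}^{m−1} (D + jn) ∪ nF, with D + jn = { d + jn : d ∈ D } and nF = { n·f : f ∈ F }. -/
open SimpleGraph Finset

/-- The circulant graph `C_n(D)` on vertex set `ZMod n` with distance set
`D ⊆ {1, …, n-1}`: distinct vertices `i, j` are adjacent iff `(i - j) mod n ∈ D`. -/
def circulant (n : ℕ) (D : Finset ℕ) : SimpleGraph (ZMod n) :=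
  SimpleGraph.fromRel (fun i j => (i - j).val ∈ D)

/-- A graph is a CIS graph if every maximal clique and every maximal stable set
(equivalently, every maximal clique of the complement) intersect. -/
def SimpleGraph.IsCIS {V : Type*} (G : SimpleGraph V) : Prop :=
  ∀ C S : Set V, Maximal G.IsClique C → Maximal Gᶜ.IsClique S → (C ∩ S).Nonempty

/-- The distance set `{d ∈ {1,…,n-1} : a ∣ d ∧ a*b ∤ d}` of a pair `(a, b)`. -/
def pairedD (n a b : ℕ) : Finset ℕ :=
  (Finset.Icc 1 (n - 1)).filter (fun d => a ∣ d ∧ ¬ (a * b) ∣ d)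

/-- The `k`-paired circulant `C(n; a_1,b_1; …; a_k,b_k)` (index type `ι`). -/
def pairedCirculant (n : ℕ) {ι : Type*} [Fintype ι] (a b : ι → ℕ) : SimpleGraph (ZMod n) :=
  circulant n (Finset.univ.biUnion (fun i => pairedD n (a i) (b i)))

/-- The lexicographic product of two simple graphs. -/
def lexProd {α β : Type*} (G : SimpleGraph α) (H : SimpleGraph β) : SimpleGraph (α × β) where
  Adj p q := G.Adj p.1 q.1 ∨ (p.1 = q.1 ∧ H.Adj p.2 q.2)
  symm := by
    constructor
    intro p q h
    rcases h with h | ⟨h1, h2⟩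
    · exact Or.inl h.symm
    · exact Or.inr ⟨h1.symm, h2.symm⟩
  loopless := by
    constructor
    intro p h
    rcases h with h | ⟨_, h⟩
    · exact G.irrefl h
    · exact H.irrefl h

/-!
Write `k ∈ ZMod (n * m)` in mixed radix as `k = u + n * x` with `u ∈ ZMod n`, `x ∈ ZMod m`; this
is a bijection `ZMod n × ZMod m ≃ ZMod (n * m)`. For two vertices, the residue mod `n` of the
difference of their codes is `u - v`, and when `u = v` the difference itself is `n * (x - y)`.
So a difference lies in `⋃ⱼ (D + j n)` exactly when `u - v ∈ D`, and in `n F` exactly when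
`u = v` and `x - y ∈ F`, which is adjacency in `C_n(D)[C_m(F)]`.
-/

theorem mem_biUnion_image_add_mul_iff {n m e : ℕ} {D : Finset ℕ} (hD : ∀ d ∈ D, d < n)
    (he : e < n * m) :
    e ∈ (range m).biUnion (fun j => D.image (· + j * n)) ↔ e % n ∈ D := by
  have hn : 0 < n := Nat.pos_of_mul_pos_right (Nat.zero_lt_of_lt he)
  simp only [mem_biUnion, mem_range, mem_image]
  constructor
  · rintro ⟨j, -, d, hd, rfl⟩
    rwa [Nat.add_mul_mod_self_right, Nat.mod_eq_of_lt (hD d hd)]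
  · intro h
    exact ⟨e / n, (Nat.div_lt_iff_lt_mul hn).2 (by rwa [mul_comm]), e % n, h, Nat.mod_add_div' e n⟩

theorem lexProd_circulant_eq_fromRel {n m : ℕ} {D : Finset ℕ} (F : Finset ℕ) (hD : 0 ∉ D) :
    lexProd (circulant n D) (circulant m F) =
      fromRel fun p q : ZMod n × ZMod m =>
        (p.1 - q.1).val ∈ D ∨ (p.1 = q.1 ∧ (p.2 - q.2).val ∈ F) := by
  ext ⟨u, x⟩ ⟨v, y⟩
  simp only [lexProd, circulant, fromRel_adj, ne_eq, Prod.mk.injEq]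
  by_cases huv : u = v
  · subst huv
    simp only [sub_self, ZMod.val_zero, hD, true_and, false_or]
    tauto
  · simp only [huv, eq_comm (a := v), false_and, or_false, not_false_eq_true]

namespace ZMod

variable {n m : ℕ}

def mixedRadix (p : ZMod n × ZMod m) : ZMod (n * m) :=
  ((p.1.val + n * p.2.val : ℕ) : ZMod (n * m))

theorem val_mixedRadix [NeZero n] [NeZero m] (p : ZMod n × ZMod m) :
    (mixedRadix p).val = p.1.val + n * p.2.val := by
  apply val_natCast_of_lt
  calc p.1.val + n * p.2.val < n + n * p.2.val := by have := p.1.val_lt; omega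
    _ = n * (p.2.val + 1) := by ring
    _ ≤ n * m := Nat.mul_le_mul_left n p.2.val_lt

theorem mixedRadix_injective [NeZero n] [NeZero m] :
    Function.Injective (mixedRadix : ZMod n × ZMod m → ZMod (n * m)) := by
  rintro ⟨u, x⟩ ⟨v, y⟩ h
  have hval := congrArg val h
  simp only [val_mixedRadix] at hval
  have hu : u.val = v.val := by
    simpa [Nat.add_mul_mod_self_left, Nat.mod_eq_of_lt u.val_lt, Nat.mod_eq_of_lt v.val_lt]
      using congrArg (· % n) hval
  have hx : x.val = y.val := Nat.eq_of_mul_eq_mul_left (NeZero.pos n) (by omega)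
  exact Prod.ext (val_injective n hu) (val_injective m hx)

theorem mixedRadix_bijective [NeZero n] [NeZero m] :
    Function.Bijective (mixedRadix : ZMod n × ZMod m → ZMod (n * m)) :=
  (Fintype.bijective_iff_injective_and_card _).2 ⟨mixedRadix_injective, by simp [card]⟩

theorem cast_mixedRadix [NeZero n] (p : ZMod n × ZMod m) :
    (cast (mixedRadix p) : ZMod n) = p.1 := by
  rw [mixedRadix, cast_natCast (Dvd.intro m rfl), Nat.cast_add, Nat.cast_mul, natCast_self,
    zero_mul, add_zero, natCast_zmod_val]

theorem val_mixedRadix_sub_mod [NeZero n] [NeZero m] (p q : ZMod n × ZMod m) :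
    (mixedRadix p - mixedRadix q).val % n = (p.1 - q.1).val := by
  rw [← cast_mixedRadix p, ← cast_mixedRadix q, ← cast_sub (Dvd.intro m rfl), cast_eq_val,
    val_natCast]

theorem mixedRadix_sub_mixedRadix_of_fst_eq [NeZero m] (u : ZMod n) (x y : ZMod m) :
    mixedRadix (u, x) - mixedRadix (u, y) = ((n * (x - y).val : ℕ) : ZMod (n * m)) := by
  have hm : ((x - y).val : ℤ) ≡ x.val - y.val [ZMOD m] :=
    (intCast_eq_intCast_iff _ _ _).1 (by simp)
  have hnm := (intCast_eq_intCast_iff _ _ (n * m)).2 (by exact_mod_cast hm.mul_left' (c := n))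
  push_cast at hnm
  simp only [mixedRadix]
  push_cast
  rw [hnm]
  ring

theorem val_mixedRadix_sub_mixedRadix_of_fst_eq [NeZero n] [NeZero m] (u : ZMod n)
    (x y : ZMod m) : (mixedRadix (u, x) - mixedRadix (u, y)).val = n * (x - y).val := by
  rw [mixedRadix_sub_mixedRadix_of_fst_eq, val_natCast_of_lt]
  exact Nat.mul_lt_mul_of_pos_left (x - y).val_lt (NeZero.pos n)

theorem val_mixedRadix_sub_mem_image_mul_iff [NeZero n] [NeZero m] (F : Finset ℕ)
    (p q : ZMod n × ZMod m) :
    (mixedRadix p - mixedRadix q).val ∈ F.image (n * ·) ↔ p.1 = q.1 ∧ (p.2 - q.2).val ∈ F := by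
  obtain ⟨u, x⟩ := p
  obtain ⟨v, y⟩ := q
  constructor
  · intro h
    obtain ⟨f, hf, hfe⟩ := mem_image.1 h
    have huv : u = v := by
      have := val_mixedRadix_sub_mod (u, x) (v, y)
      rwa [← hfe, Nat.mul_mod_right, eq_comm, val_eq_zero, sub_eq_zero] at this
    subst huv
    rw [val_mixedRadix_sub_mixedRadix_of_fst_eq] at hfe
    exact ⟨rfl, Nat.eq_of_mul_eq_mul_left (NeZero.pos n) hfe ▸ hf⟩
  · rintro ⟨rfl, h⟩
    exact mem_image.2 ⟨_, h, (val_mixedRadix_sub_mixedRadix_of_fst_eq u x y).symm⟩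

theorem val_mixedRadix_sub_mem_iff [NeZero n] [NeZero m] {D : Finset ℕ} (F : Finset ℕ)
    (hD : ∀ d ∈ D, d < n) (p q : ZMod n × ZMod m) :
    (mixedRadix p - mixedRadix q).val ∈
        (range m).biUnion (fun j => D.image (· + j * n)) ∪ F.image (n * ·) ↔
      (p.1 - q.1).val ∈ D ∨ (p.1 = q.1 ∧ (p.2 - q.2).val ∈ F) := by
  rw [mem_union, mem_biUnion_image_add_mul_iff hD (val_lt _), val_mixedRadix_sub_mod,
    val_mixedRadix_sub_mem_image_mul_iff]

end ZMod

theorem stmt_3_general (n m : ℕ) (hn : 0 < n) (hm : 0 < m) (D F : Finset ℕ)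
    (hD : D ⊆ Finset.Icc 1 (n - 1)) :
    Nonempty (lexProd (circulant n D) (circulant m F) ≃g
      circulant (n * m)
        ((Finset.range m).biUnion (fun j => D.image (· + j * n)) ∪ F.image (n * ·))) := by
  have : NeZero n := ⟨hn.ne'⟩
  have : NeZero m := ⟨hm.ne'⟩
  have hD_lt : ∀ d ∈ D, d < n := fun d hd => by have := mem_Icc.1 (hD hd); omega
  have hD_zero : 0 ∉ D := fun h => by simpa using hD h
  rw [lexProd_circulant_eq_fromRel F hD_zero]
  refine ⟨⟨Equiv.ofBijective _ ZMod.mixedRadix_bijective, fun {p q} => ?_⟩⟩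
  simp only [circulant, fromRel_adj, Equiv.ofBijective_apply,
    ZMod.mixedRadix_injective.ne_iff, ZMod.val_mixedRadix_sub_mem_iff F hD_lt]

/-- The lexicographic product of `C_n(D)` and `C_m(F)` is isomorphic to the
circulant `C_{nm}(T)` with `T = ⋃_{j=0}^{m-1} (D + jn) ∪ nF`. -/
theorem stmt_3 (n m : ℕ) (hn : 0 < n) (hm : 0 < m) (D F : Finset ℕ)
    (hD : D ⊆ Finset.Icc 1 (n - 1)) (hDsym : ∀ d ∈ D, n - d ∈ D)
    (hF : F ⊆ Finset.Icc 1 (m - 1)) (hFsym : ∀ f ∈ F, m - f ∈ F) :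
    Nonempty (lexProd (circulant n D) (circulant m F) ≃g
      circulant (n * m)
        ((Finset.range m).biUnion (fun j => D.image (· + j * n)) ∪ F.image (n * ·))) :=
  stmt_3_general n m hn hm D F hD
end

section
/- Every 1-paired circulant C(n; a, b) is a CIS graph; that is, for all positive integers n, a, b with a·b ∣ n, the circulant C_n(D) with D = { d ∈ {1,…,n−1} : a ∣ d and a·b ∤ d } is a CIS graph. -/
open SimpleGraph Finset

/-!
Writing `ψ : ZMod n → ZMod (a*b)` and `π : ZMod (a*b) → ZMod a` for the reductions, two vertices
of `C(n; a, b)` are adjacent exactly when `ψ` separates them but `π ∘ ψ` does not. So the graph is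
the pullback along the surjection `ψ` of the disjoint union of the cliques on the fibres of `π`,
which is clearly CIS. Pulling back along a surjection preserves the CIS property: the images of a
maximal clique and of a maximal stable set are again maximal, and a vertex of the clique lying over
their common point has the same neighbours as a vertex of the stable set, so it belongs to it.
-/

namespace SimpleGraph

variable {V W U : Type*}

lemma mem_of_maximal_isClique {G : SimpleGraph V} {C : Set V} {v : V}
    (hC : Maximal G.IsClique C) (h : ∀ c ∈ C, v ≠ c → G.Adj v c) : v ∈ C :=
  hC.mem_of_prop_insert (hC.1.insert h)

lemma mem_of_maximal_compl_isClique {G : SimpleGraph V} {S : Set V} {v : V}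
    (hS : Maximal Gᶜ.IsClique S) (h : ∀ s ∈ S, ¬ G.Adj v s) : v ∈ S :=
  mem_of_maximal_isClique hS fun s hs hvs => (compl_adj G v s).2 ⟨hvs, h s hs⟩

section Comap

variable {H : SimpleGraph W} {f : V → W}

lemma maximal_isClique_image (hf : f.Surjective) {C : Set V}
    (hC : Maximal (H.comap f).IsClique C) : Maximal H.IsClique (f '' C) := by
  have hclique : H.IsClique (f '' C) := by
    rintro _ ⟨x, hx, rfl⟩ _ ⟨y, hy, rfl⟩ hxy
    exact hC.1 hx hy (ne_of_apply_ne f hxy)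
  refine ⟨hclique, fun T hT hCT w hwT => ?_⟩
  obtain ⟨v, rfl⟩ := hf w
  by_contra hv
  refine hv ⟨v, mem_of_maximal_isClique hC fun c hc _ => ?_, rfl⟩
  exact hT hwT (hCT ⟨c, hc, rfl⟩) fun hvc => hv ⟨c, hc, hvc.symm⟩

lemma maximal_compl_isClique_image (hf : f.Surjective) {S : Set V}
    (hS : Maximal (H.comap f)ᶜ.IsClique S) : Maximal Hᶜ.IsClique (f '' S) := by
  have hstable : Hᶜ.IsClique (f '' S) := by
    rintro _ ⟨x, hx, rfl⟩ _ ⟨y, hy, rfl⟩ hxy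
    exact (compl_adj _ _ _).2 ⟨hxy, ((compl_adj _ _ _).1 (hS.1 hx hy (ne_of_apply_ne f hxy))).2⟩
  refine ⟨hstable, fun T hT hST w hwT => ?_⟩
  obtain ⟨v, rfl⟩ := hf w
  by_contra hv
  refine hv ⟨v, mem_of_maximal_compl_isClique hS fun s hs hvs => ?_, rfl⟩
  exact ((compl_adj _ _ _).1 (hT hwT (hST ⟨s, hs, rfl⟩) fun h => hv ⟨s, hs, h.symm⟩)).2 hvs

theorem IsCIS.comap (hH : H.IsCIS) (hf : f.Surjective) : (H.comap f).IsCIS := by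
  intro C S hC hS
  obtain ⟨_, ⟨c, hcC, rfl⟩, s, hsS, hsc⟩ :=
    hH _ _ (maximal_isClique_image hf hC) (maximal_compl_isClique_image hf hS)
  refine ⟨c, hcC, mem_of_maximal_compl_isClique hS fun t htS hct => ?_⟩
  have hst : (H.comap f).Adj s t := by simpa only [comap_adj, hsc] using hct
  exact ((compl_adj _ _ _).1 (hS.1 hsS htS hst.ne)).2 hst

end Comap

def sameFiber (g : W → U) : SimpleGraph W where
  Adj x y := x ≠ y ∧ g x = g y
  symm := ⟨fun _ _ h => ⟨h.1.symm, h.2.symm⟩⟩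
  loopless := ⟨fun _ h => h.1 rfl⟩

@[simp]
lemma sameFiber_adj {g : W → U} {x y : W} : (sameFiber g).Adj x y ↔ x ≠ y ∧ g x = g y :=
  Iff.rfl

theorem sameFiber_isCIS [Nonempty W] (g : W → U) : (sameFiber g).IsCIS := by
  intro C S hC hS
  obtain ⟨c, hcC⟩ : C.Nonempty := by
    rw [Set.nonempty_iff_ne_empty]
    rintro rfl
    exact mem_of_maximal_isClique hC (v := Classical.arbitrary W) (by simp)
  have hfiber : ∀ x ∈ C, g x = g c := fun x hx => by
    by_cases hxc : x = c
    · rw [hxc]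
    · exact (hC.1 hx hcC hxc).2
  obtain ⟨s, hsS, hsc⟩ : ∃ s ∈ S, g s = g c := by
    by_contra! h
    have hcS : c ∈ S :=
      mem_of_maximal_compl_isClique hS fun s hs hcs => h s hs hcs.2.symm
    exact h c hcS rfl
  exact ⟨s, mem_of_maximal_isClique hC fun x hx hsx => ⟨hsx, hsc.trans (hfiber x hx).symm⟩, hsS⟩

end SimpleGraph

lemma ZMod.dvd_val_iff_castHom_eq_zero {n m : ℕ} [NeZero n] (hm : m ∣ n) (x : ZMod n) :
    m ∣ x.val ↔ ZMod.castHom hm (ZMod m) x = 0 := by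
  rw [ZMod.castHom_apply, ZMod.cast_eq_val, ZMod.natCast_eq_zero_iff]

lemma val_sub_mem_pairedD_iff {n a b : ℕ} [NeZero n] (hab : a * b ∣ n) (i j : ZMod n) :
    (i - j).val ∈ pairedD n a b ↔
      ZMod.castHom hab (ZMod (a * b)) i ≠ ZMod.castHom hab (ZMod (a * b)) j ∧
        ZMod.castHom (dvd_mul_right a b) (ZMod a) (ZMod.castHom hab (ZMod (a * b)) i) =
          ZMod.castHom (dvd_mul_right a b) (ZMod a) (ZMod.castHom hab (ZMod (a * b)) j) := by
  rw [← RingHom.comp_apply, ← RingHom.comp_apply, ZMod.castHom_comp (dvd_mul_right a b) hab, ← sub_eq_zero, ← map_sub, ← sub_ne_zero,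
    ← map_sub, ne_eq, ← ZMod.dvd_val_iff_castHom_eq_zero, ← ZMod.dvd_val_iff_castHom_eq_zero,
    pairedD, Finset.mem_filter, Finset.mem_Icc]
  -- `0` is a multiple of `a * b` and `val < n`, so the range condition `1 ≤ val ≤ n - 1` is automatic.
  have hlt := ZMod.val_lt (i - j)
  constructor
  · rintro ⟨-, hdvd, hndvd⟩
    exact ⟨hndvd, hdvd⟩
  · rintro ⟨hndvd, hdvd⟩
    exact ⟨⟨Nat.one_le_iff_ne_zero.2 fun h => hndvd (h ▸ dvd_zero _), by omega⟩, hdvd, hndvd⟩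

theorem circulant_pairedD_eq_comap {n a b : ℕ} [NeZero n] (hab : a * b ∣ n) :
    circulant n (pairedD n a b) =
      (sameFiber (ZMod.castHom (dvd_mul_right a b) (ZMod a))).comap
        (ZMod.castHom hab (ZMod (a * b))) := by
  ext i j
  simp only [circulant, fromRel_adj, comap_adj, sameFiber_adj, val_sub_mem_pairedD_iff hab]
  constructor
  · rintro ⟨-, h | h⟩
    · exact h
    · exact ⟨h.1.symm, h.2.symm⟩
  · rintro h
    exact ⟨fun hij => h.1 (hij ▸ rfl), Or.inl h⟩

theorem stmt_4_general (n a b : ℕ) (hn : 0 < n) (hab : a * b ∣ n) :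
    (circulant n (pairedD n a b)).IsCIS := by
  have : NeZero n := ⟨hn.ne'⟩
  rw [circulant_pairedD_eq_comap hab]
  exact (sameFiber_isCIS _).comap (ZMod.ringHom_surjective _)

/-- Every 1-paired circulant `C(n; a, b)` is a CIS graph. -/
theorem stmt_4 (n a b : ℕ) (hn : 0 < n) (ha : 0 < a) (hb : 0 < b) (hab : a * b ∣ n) :
    (circulant n (pairedD n a b)).IsCIS :=
  stmt_4_general n a b hn hab
end

section
/- Let G = C(n; a_1,b_1; …; a_k,b_k) and H = C(m; a'_1,b'_1; …; a'_ℓ,b'_ℓ) be paired circulants. Then the lexicographic product G[H] is isomorphic to the (k+ℓ)-paired circulant C(nm; a_1,b_1; …; a_k,b_k; n·a'_1,b'_1; …; n·a'_ℓ,b'_ℓ). -/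
open SimpleGraph Finset

/-! Write a vertex of `ZMod (n * m)` in mixed radix as `x + n y` with `x : ZMod n`, `y : ZMod m`.
The difference of two vertices is `≡ x - x' (mod n)`, so a pair `(aᵢ, bᵢ)`, for which `aᵢ bᵢ ∣ n`,
sees only the first coordinates. A difference in a pair `(n a'ⱼ, b'ⱼ)` is a multiple of `n`,
which forces `x = x'`; the difference is then `n (y - y')`, and dividing by `n` turns that pair
into `(a'ⱼ, b'ⱼ)` acting on the second coordinates. -/

namespace SimpleGraph

theorem lexProd_fromRel {α β : Type*} {r : α → α → Prop} {s : β → β → Prop}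
    (hr : ∀ x, ¬ r x x) :
    lexProd (fromRel r) (fromRel s) = fromRel (fun p q => r p.1 q.1 ∨ p.1 = q.1 ∧ s p.2 q.2) := by
  ext p q
  simp only [lexProd, fromRel_adj, ne_eq, Prod.ext_iff]
  by_cases h : p.1 = q.1 <;> grind

end SimpleGraph

theorem Fin.exists_fin_add {m n : ℕ} (P : Fin (m + n) → Prop) :
    (∃ i, P i) ↔ (∃ i, P (castAdd n i)) ∨ ∃ j, P (natAdd m j) := by
  simpa only [not_forall_not, not_and_or] using (Fin.forall_fin_add (fun i => ¬ P i)).not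

theorem val_add_mul_val_lt {n m : ℕ} [NeZero n] [NeZero m] (p : ZMod n × ZMod m) :
    p.1.val + n * p.2.val < n * m := by
  have h1 := ZMod.val_lt p.1
  have h2 := ZMod.val_lt p.2
  calc p.1.val + n * p.2.val < n * (p.2.val + 1) := by linarith
    _ ≤ n * m := Nat.mul_le_mul_left n h2

def prodEquiv (n m : ℕ) [NeZero n] [NeZero m] : ZMod n × ZMod m ≃ ZMod (n * m) where
  toFun p := ((p.1.val + n * p.2.val : ℕ) : ZMod (n * m))
  invFun x := ((x.val % n : ℕ), (x.val / n : ℕ))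
  left_inv p := by
    have hn := Nat.pos_of_neZero n
    dsimp only
    rw [ZMod.val_cast_of_lt (val_add_mul_val_lt p), Nat.add_mul_mod_self_left,
      Nat.mod_eq_of_lt (ZMod.val_lt _), Nat.add_mul_div_left _ _ hn,
      Nat.div_eq_of_lt (ZMod.val_lt _), zero_add, ZMod.natCast_zmod_val, ZMod.natCast_zmod_val]
  right_inv x := by
    have hn := Nat.pos_of_neZero n
    dsimp only
    rw [ZMod.val_cast_of_lt (Nat.mod_lt _ hn),
      ZMod.val_cast_of_lt (Nat.div_lt_of_lt_mul (ZMod.val_lt x)), Nat.mod_add_div,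
      ZMod.natCast_zmod_val]

theorem natCast_mul_val_add {n m : ℕ} [NeZero m] (y z : ZMod m) :
    ((n * (y + z).val : ℕ) : ZMod (n * m)) = n * y.val + n * z.val := by
  rw [ZMod.val_add, ← Nat.mul_mod_mul_left, ZMod.natCast_mod]
  push_cast
  ring

section prodEquiv

variable {n m : ℕ} [NeZero n] [NeZero m]

theorem castHom_prodEquiv (p : ZMod n × ZMod m) :
    ZMod.castHom (dvd_mul_right n m) (ZMod n) (prodEquiv n m p) = p.1 := by
  rw [prodEquiv, Equiv.coe_fn_mk, map_natCast]
  push_cast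
  rw [ZMod.natCast_self, zero_mul, add_zero, ZMod.natCast_zmod_val]

theorem val_sub_prodEquiv_mod (p q : ZMod n × ZMod m) :
    (prodEquiv n m p - prodEquiv n m q).val % n = (p.1 - q.1).val := by
  rw [← ZMod.val_natCast, ← ZMod.cast_eq_val, ← ZMod.castHom_apply (h := dvd_mul_right n m),
    map_sub, castHom_prodEquiv, castHom_prodEquiv]

theorem val_sub_prodEquiv_of_fst_eq {p q : ZMod n × ZMod m} (h : p.1 = q.1) :
    (prodEquiv n m p - prodEquiv n m q).val = n * (p.2 - q.2).val := by
  have hlt : n * (p.2 - q.2).val < n * m :=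
    Nat.mul_lt_mul_of_pos_left (ZMod.val_lt _) (Nat.pos_of_neZero n)
  have hdiff : prodEquiv n m p - prodEquiv n m q = ((n * (p.2 - q.2).val : ℕ) : ZMod (n * m)) := by
    have := natCast_mul_val_add (n := n) (p.2 - q.2) q.2
    rw [sub_add_cancel] at this
    push_cast at this
    simp only [prodEquiv, Equiv.coe_fn_mk, h]
    push_cast
    linear_combination this
  rw [hdiff, ZMod.val_cast_of_lt hlt]

end prodEquiv

theorem mem_pairedD_iff_of_lt {N a b d : ℕ} (hd : d < N) :
    d ∈ pairedD N a b ↔ a ∣ d ∧ ¬ a * b ∣ d := by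
  simp only [pairedD, mem_filter, mem_Icc, and_iff_right_iff_imp, and_imp]
  intro _ hab
  have : d ≠ 0 := by rintro rfl; exact hab (dvd_zero _)
  omega

theorem zero_notMem_pairedD (N a b : ℕ) : 0 ∉ pairedD N a b := by
  simp [pairedD]

theorem mem_pairedD_mul_iff_mod {n m a b d : ℕ} (hn : 0 < n) (hab : a * b ∣ n)
    (hd : d < n * m) :
    d ∈ pairedD (n * m) a b ↔ d % n ∈ pairedD n a b := by
  rw [mem_pairedD_iff_of_lt hd, mem_pairedD_iff_of_lt (Nat.mod_lt d hn),
    Nat.dvd_mod_iff (dvd_trans (dvd_mul_right a b) hab), Nat.dvd_mod_iff hab]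

theorem mul_mem_pairedD_mul_iff {n m a b e : ℕ} (hn : 0 < n) (he : e < m) :
    n * e ∈ pairedD (n * m) (n * a) b ↔ e ∈ pairedD m a b := by
  rw [mem_pairedD_iff_of_lt (Nat.mul_lt_mul_of_pos_left he hn), mem_pairedD_iff_of_lt he,
    mul_assoc, Nat.mul_dvd_mul_iff_left hn, Nat.mul_dvd_mul_iff_left hn]

theorem val_sub_prodEquiv_mem_iff {n m k l : ℕ} [NeZero n] [NeZero m]
    (a b : Fin k → ℕ) (a' b' : Fin l → ℕ) (hab : ∀ i, a i * b i ∣ n)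
    (p q : ZMod n × ZMod m) :
    (prodEquiv n m p - prodEquiv n m q).val ∈
        univ.biUnion (fun i => pairedD (n * m) (Fin.append a (fun i => n * a' i) i)
          (Fin.append b b' i)) ↔
      (p.1 - q.1).val ∈ univ.biUnion (fun i => pairedD n (a i) (b i)) ∨
        p.1 = q.1 ∧ (p.2 - q.2).val ∈ univ.biUnion (fun i => pairedD m (a' i) (b' i)) := by
  have hn := Nat.pos_of_neZero n
  have hd := ZMod.val_lt (prodEquiv n m p - prodEquiv n m q)
  simp only [mem_biUnion, mem_univ, true_and, Fin.exists_fin_add, Fin.append_left,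
    Fin.append_right]
  refine or_congr (exists_congr fun i => ?_) ?_
  · rw [mem_pairedD_mul_iff_mod hn (hab i) hd, val_sub_prodEquiv_mod]
  by_cases h : p.1 = q.1
  · simp only [h, true_and, val_sub_prodEquiv_of_fst_eq h,
      mul_mem_pairedD_mul_iff hn (ZMod.val_lt _)]
  · simp only [h, false_and, iff_false, not_exists]
    intro j hj
    have hdvd : n ∣ (prodEquiv n m p - prodEquiv n m q).val :=
      dvd_trans (dvd_mul_right n _) ((mem_pairedD_iff_of_lt hd).1 hj).1
    have hmod := Nat.mod_eq_zero_of_dvd hdvd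
    rw [val_sub_prodEquiv_mod, ZMod.val_eq_zero, sub_eq_zero] at hmod
    exact h hmod

theorem stmt_6_general (n m k l : ℕ) (hn : 0 < n) (hm : 0 < m)
    (a b : Fin k → ℕ) (a' b' : Fin l → ℕ)
    (hab : ∀ i, a i * b i ∣ n) :
    Nonempty (lexProd (pairedCirculant n a b) (pairedCirculant m a' b') ≃g
      pairedCirculant (n * m) (Fin.append a (fun i => n * a' i)) (Fin.append b b')) := by
  have : NeZero n := ⟨hn.ne'⟩
  have : NeZero m := ⟨hm.ne'⟩
  have hirrefl (x : ZMod n) : (x - x).val ∉ univ.biUnion (fun i => pairedD n (a i) (b i)) := by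
    simp [zero_notMem_pairedD]
  suffices h : lexProd (pairedCirculant n a b) (pairedCirculant m a' b') =
      (pairedCirculant (n * m) _ _).comap (prodEquiv n m) from h ▸ ⟨Iso.comap _ _⟩
  rw [pairedCirculant, pairedCirculant, circulant, circulant, lexProd_fromRel hirrefl]
  ext p q
  simp only [comap_adj, pairedCirculant, circulant, fromRel_adj, (prodEquiv n m).injective.ne_iff,
    val_sub_prodEquiv_mem_iff a b a' b' hab]

/-- The lexicographic product of the paired circulants
`C(n; a₁,b₁; …; a_k,b_k)` and `C(m; a'₁,b'₁; …; a'_ℓ,b'_ℓ)` is isomorphic to the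
`(k+ℓ)`-paired circulant `C(nm; a₁,b₁; …; a_k,b_k; n·a'₁,b'₁; …; n·a'_ℓ,b'_ℓ)`. -/
theorem stmt_6 (n m k l : ℕ) (hn : 0 < n) (hm : 0 < m)
    (a b : Fin k → ℕ) (a' b' : Fin l → ℕ)
    (ha : ∀ i, 0 < a i) (hb : ∀ i, 0 < b i) (hab : ∀ i, a i * b i ∣ n)
    (ha' : ∀ i, 0 < a' i) (hb' : ∀ i, 0 < b' i) (hab' : ∀ i, a' i * b' i ∣ m) :
    Nonempty (lexProd (pairedCirculant n a b) (pairedCirculant m a' b') ≃g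
      pairedCirculant (n * m) (Fin.append a (fun i => n * a' i)) (Fin.append b b')) :=
  stmt_6_general n m k l hn hm a b a' b' hab
end

section
/- Let G = C(n; a_1,b_1; …; a_k,b_k) be a k-paired circulant. If b_i = 1 for all i ∈ [k], then G has exactly n connected components (G is edgeless); otherwise, the number of connected components of G equals gcd(A), where A = { a_i : i ∈ [k] and b_i > 1 }. In particular, G is connected if and only if either n = 1, or b_i > 1 for some i ∈ [k] and gcd(A) = 1. -/
open SimpleGraph Finset

/-!
Reachability in a circulant graph on `ZMod n` is invariant under translation, so the component
of `0` is the additive subgroup `H` generated by the distances and the components are the cosets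
of `H`; their number is the index of `H`. The pair `(aᵢ, bᵢ)` contributes distances only when
`bᵢ > 1`; each of them is a multiple of `aᵢ`, and `aᵢ` itself is one. Hence `H` is generated by
`g = gcd {aᵢ : bᵢ > 1}`, and its index in `ZMod n` is `gcd g n`: this is `g` when some `bᵢ > 1`
(then `g ∣ n`) and `n` otherwise (then `g = 0`).
-/

namespace AddSubgroup

theorem zmultiples_natCast_sup_zmultiples_natCast {R : Type*} [AddGroupWithOne R] (m k : ℕ) :
    zmultiples (m : R) ⊔ zmultiples (k : R) = zmultiples (Nat.gcd m k : R) := by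
  simpa [map_sup, AddMonoidHom.map_zmultiples] using
    congrArg (map (Int.castAddHom R)) (Int.zmultiples_sup m k)

theorem closure_image_natCast {R ι : Type*} [AddGroupWithOne R] (s : Finset ι) (a : ι → ℕ) :
    closure ((fun i => (a i : R)) '' s) = zmultiples ((s.gcd a : ℕ) : R) := by
  classical
  induction s using Finset.induction_on with
  | empty => simp
  | insert j s _ ih =>
    rw [Finset.coe_insert, Set.image_insert_eq, Set.insert_eq, closure_union, ih,
      Finset.gcd_insert, ← zmultiples_eq_closure, zmultiples_natCast_sup_zmultiples_natCast]
    rfl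

end AddSubgroup

theorem ZMod.index_zmultiples_natCast (n g : ℕ) :
    (AddSubgroup.zmultiples (g : ZMod n)).index = Nat.gcd g n := by
  have hmap : AddSubgroup.zmultiples (g : ZMod n) =
      (AddSubgroup.zmultiples (g : ℤ)).map (Int.castAddHom (ZMod n)) := by
    simp [AddMonoidHom.map_zmultiples]
  rw [← AddSubgroup.index_comap_of_surjective _ (f := Int.castAddHom (ZMod n))
      ZMod.intCast_surjective, hmap, AddSubgroup.comap_map_eq, ZMod.ker_intCastAddHom,
    Int.zmultiples_sup, Int.index_zmultiples]
  simp

theorem SimpleGraph.connected_iff_card_connectedComponent_eq_one {V : Type*} [Nonempty V]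
    (G : SimpleGraph V) : G.Connected ↔ Nat.card G.ConnectedComponent = 1 := by
  rw [connected_iff, Nat.card_eq_one_iff_unique]
  exact ⟨fun ⟨h, _⟩ => ⟨h.subsingleton_connectedComponent, inferInstance⟩,
    fun ⟨_, _⟩ => ⟨fun _ _ => ConnectedComponent.eq.mp (Subsingleton.elim _ _), inferInstance⟩⟩

namespace circulant

variable {n : ℕ} {D : Finset ℕ}

theorem adj_iff {x y : ZMod n} :
    (circulant n D).Adj x y ↔ x ≠ y ∧ ((x - y).val ∈ D ∨ (y - x).val ∈ D) :=
  Iff.rfl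

theorem reachable_iff {x y : ZMod n} :
    (circulant n D).Reachable x y ↔ y - x ∈ AddSubgroup.closure {z : ZMod n | z.val ∈ D} := by
  constructor
  · rintro ⟨p⟩
    induction p with
    | nil => simp
    | @cons u v w huv _ ih =>
      rw [← sub_add_sub_cancel w v u]
      refine add_mem ih ?_
      rcases (adj_iff.mp huv).2 with h | h
      · simpa using neg_mem (AddSubgroup.subset_closure (k := {z : ZMod n | z.val ∈ D}) h)
      · exact AddSubgroup.subset_closure (k := {z : ZMod n | z.val ∈ D}) h
  · intro h
    suffices ∀ z ∈ AddSubgroup.closure {z : ZMod n | z.val ∈ D}, ∀ x,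
        (circulant n D).Reachable x (x + z) by
      simpa using this _ h x
    intro z hz
    induction hz using AddSubgroup.closure_induction with
    | mem z hz =>
      intro x
      by_cases hz0 : z = 0
      · simp [hz0]
      · exact Adj.reachable (adj_iff.mpr ⟨by simpa using hz0, Or.inr (by simpa using hz)⟩)
    | zero => simp
    | add z₁ z₂ _ _ ih₁ ih₂ =>
      exact fun x => (ih₁ x).trans (by simpa [add_assoc] using ih₂ (x + z₁))
    | neg z _ ih => exact fun x => by simpa using (ih (x + -z)).symm

theorem card_connectedComponent :
    Nat.card (circulant n D).ConnectedComponent =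
      (AddSubgroup.closure {z : ZMod n | z.val ∈ D}).index :=
  Nat.card_congr <| Quot.congrRight fun x y => by
    rw [reachable_iff, ← neg_add_eq_sub]; exact QuotientAddGroup.leftRel_apply.symm

end circulant

section pairedCirculant

variable {n : ℕ}

theorem one_lt_of_mem_pairedD {a b d : ℕ} (hn : 0 < n) (hab : a * b ∣ n)
    (hd : d ∈ pairedD n a b) : 1 < b := by
  simp only [pairedD, Finset.mem_filter] at hd
  rcases Nat.lt_trichotomy b 1 with hb | rfl | hb
  · obtain rfl : b = 0 := by omega
    simp only [mul_zero, zero_dvd_iff] at hab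
    omega
  · exact absurd hd.2.1 (by simpa using hd.2.2)
  · exact hb

theorem lt_of_mem_pairedD {a b d : ℕ} (hd : d ∈ pairedD n a b) : d < n := by
  simp only [pairedD, Finset.mem_filter, Finset.mem_Icc] at hd
  omega

theorem self_mem_pairedD {a b : ℕ} (hn : 0 < n) (hab : a * b ∣ n) (ha : 0 < a) (hb : 1 < b) :
    a ∈ pairedD n a b := by
  have hlt : a < a * b := lt_mul_of_one_lt_right ha hb
  have hle : a * b ≤ n := Nat.le_of_dvd hn hab
  simp only [pairedD, Finset.mem_filter, Finset.mem_Icc]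
  exact ⟨⟨ha, by omega⟩, dvd_rfl, fun h => absurd (Nat.le_of_dvd ha h) (by omega)⟩

theorem closure_pairedCirculant {ι : Type*} [Fintype ι] {a b : ι → ℕ} (hn : 0 < n)
    (hab : ∀ i, a i * b i ∣ n) :
    AddSubgroup.closure
        {z : ZMod n | z.val ∈ Finset.univ.biUnion fun i => pairedD n (a i) (b i)} =
      AddSubgroup.zmultiples (((Finset.univ.filter fun i => 1 < b i).gcd a : ℕ) : ZMod n) := by
  have : NeZero n := ⟨hn.ne'⟩
  rw [← AddSubgroup.closure_image_natCast]
  apply le_antisymm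
  · rw [AddSubgroup.closure_le]
    intro z hz
    obtain ⟨i, hi⟩ : ∃ i, z.val ∈ pairedD n (a i) (b i) := by simpa using hz
    obtain ⟨m, hm⟩ : a i ∣ z.val := (Finset.mem_filter.mp hi).2.1
    have hz : z = m • (a i : ZMod n) := by
      rw [← ZMod.natCast_zmod_val z, hm, nsmul_eq_mul, mul_comm, Nat.cast_mul]
    rw [hz]
    exact nsmul_mem (AddSubgroup.subset_closure (Set.mem_image_of_mem _
      (by simpa using one_lt_of_mem_pairedD hn (hab i) hi))) m
  · rw [AddSubgroup.closure_le]
    rintro _ ⟨i, hi, rfl⟩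
    rcases Nat.eq_zero_or_pos (a i) with ha | ha
    · simp [ha]
    · have hmem := self_mem_pairedD hn (hab i) ha (by simpa using hi)
      apply AddSubgroup.subset_closure
      simpa [ZMod.val_natCast_of_lt (lt_of_mem_pairedD hmem)] using ⟨i, hmem⟩

theorem card_connectedComponent_pairedCirculant {ι : Type*} [Fintype ι] {a b : ι → ℕ}
    (hn : 0 < n) (hab : ∀ i, a i * b i ∣ n) :
    Nat.card (pairedCirculant n a b).ConnectedComponent =
      Nat.gcd ((Finset.univ.filter fun i => 1 < b i).gcd a) n := by
  rw [pairedCirculant, circulant.card_connectedComponent, closure_pairedCirculant hn hab,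
    ZMod.index_zmultiples_natCast]

end pairedCirculant

theorem stmt_8_general (n k : ℕ) (hn : 0 < n) (a b : Fin k → ℕ)
    (hab : ∀ i, a i * b i ∣ n) :
    ((∀ i, b i = 1) → Nat.card (pairedCirculant n a b).ConnectedComponent = n) ∧
    ((∃ i, 1 < b i) →
      Nat.card (pairedCirculant n a b).ConnectedComponent =
        (Finset.univ.filter (fun i => 1 < b i)).gcd a) ∧
    ((pairedCirculant n a b).Connected ↔
      n = 1 ∨ ((∃ i, 1 < b i) ∧ (Finset.univ.filter (fun i => 1 < b i)).gcd a = 1)) := by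
  have hcard := card_connectedComponent_pairedCirculant hn hab
  set g := (Finset.univ.filter (fun i => 1 < b i)).gcd a
  have hg_dvd (h : ∃ i, 1 < b i) : g ∣ n := by
    obtain ⟨i, hi⟩ := h
    exact (Finset.gcd_dvd (by simpa using hi)).trans ((dvd_mul_right _ _).trans (hab i))
  have hg_zero (h : ¬∃ i, 1 < b i) : g = 0 := by
    simp only [g, Finset.filter_false_of_mem fun i _ hi => h ⟨i, hi⟩, Finset.gcd_empty]
  refine ⟨fun h => ?_, fun h => by rw [hcard, Nat.gcd_eq_left (hg_dvd h)], ?_⟩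
  · rw [hcard, hg_zero (by simp [h]), Nat.gcd_zero_left]
  rw [connected_iff_card_connectedComponent_eq_one, hcard]
  by_cases h : ∃ i, 1 < b i
  · rw [Nat.gcd_eq_left (hg_dvd h)]
    exact ⟨fun h1 => Or.inr ⟨h, h1⟩, by
      rintro (rfl | ⟨-, h1⟩)
      exacts [Nat.dvd_one.mp (hg_dvd h), h1]⟩
  · simp [hg_zero h, h]

/-- If `b_i = 1` for all `i`, a `k`-paired circulant has exactly `n` connected
components; otherwise it has `gcd {a_i : b_i > 1}` components. In particular it is connected
iff `n = 1`, or `b_i > 1` for some `i` and `gcd {a_i : b_i > 1} = 1`. -/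
theorem stmt_8 (n k : ℕ) (hn : 0 < n) (a b : Fin k → ℕ)
    (ha : ∀ i, 0 < a i) (hb : ∀ i, 0 < b i) (hab : ∀ i, a i * b i ∣ n) :
    ((∀ i, b i = 1) → Nat.card (pairedCirculant n a b).ConnectedComponent = n) ∧
    ((∃ i, 1 < b i) →
      Nat.card (pairedCirculant n a b).ConnectedComponent =
        (Finset.univ.filter (fun i => 1 < b i)).gcd a) ∧
    ((pairedCirculant n a b).Connected ↔
      n = 1 ∨ ((∃ i, 1 < b i) ∧ (Finset.univ.filter (fun i => 1 < b i)).gcd a = 1)) :=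
  stmt_8_general n k hn a b hab
end

section
/- Let G = C(n; a_1,b_1; a_2,b_2) be a 2-paired circulant. Then every clique C of G is either an a_1-clique or an a_2-clique; that is, either i ≡ j (mod a_1) holds for all i, j ∈ C, or i ≡ j (mod a_2) holds for all i, j ∈ C. -/
open SimpleGraph Finset

/-!
Adjacent vertices of `C(n; a₁,b₁; a₂,b₂)` are congruent mod `a₁` or mod `a₂`, and both
congruences are equivalence relations; a set on which every pair is related by one of two
equivalence relations is entirely related by one of them.
-/

/- Given `x, y` not `r`-related and `u, v` not `s`-related, `u` and `v` become `s`-related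
through `y` if `r x u` holds and through `x` otherwise. -/
theorem Equivalence.forall_or_forall_of_forall_or {α : Type*} {r s : α → α → Prop}
    (hr : Equivalence r) (hs : Equivalence s) {C : Set α}
    (h : ∀ x ∈ C, ∀ y ∈ C, r x y ∨ s x y) :
    (∀ x ∈ C, ∀ y ∈ C, r x y) ∨ (∀ x ∈ C, ∀ y ∈ C, s x y) := by
  by_contra! ⟨⟨x, hx, y, hy, hxy⟩, ⟨u, hu, v, hv, huv⟩⟩
  have huv_r : r u v := (h u hu v hv).resolve_right huv
  by_cases hxu : r x u
  · have hyu : s y u := (h y hy u hu).resolve_left fun h' => hxy (hr.trans hxu (hr.symm h'))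
    have hyv : s y v := (h y hy v hv).resolve_left
      fun h' => hxy (hr.trans (hr.trans hxu huv_r) (hr.symm h'))
    exact huv (hs.trans (hs.symm hyu) hyv)
  · have hxu_s : s x u := (h x hx u hu).resolve_left hxu
    have hxv_s : s x v := (h x hx v hv).resolve_left
      fun h' => hxu (hr.trans h' (hr.symm huv_r))
    exact huv (hs.trans (hs.symm hxu_s) hxv_s)

theorem ZMod.val_modEq_of_dvd_val_sub {n a : ℕ} [NeZero n] (ha : a ∣ n) {x y : ZMod n}
    (h : a ∣ (x - y).val) : x.val ≡ y.val [MOD a] := by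
  have hcast : ((x - y).val : ZMod a) = 0 := (ZMod.natCast_eq_zero_iff _ _).mpr h
  rw [ZMod.natCast_val, ZMod.cast_sub ha, sub_eq_zero, ← ZMod.natCast_val,
    ← ZMod.natCast_val] at hcast
  exact (ZMod.natCast_eq_natCast_iff _ _ _).mp hcast

theorem circulant_union (n : ℕ) (D₁ D₂ : Finset ℕ) :
    circulant n (D₁ ∪ D₂) = circulant n D₁ ⊔ circulant n D₂ := by
  ext x y
  simp only [circulant, sup_adj, fromRel_adj, Finset.mem_union]
  tauto

theorem val_modEq_of_circulant_adj {n a : ℕ} [NeZero n] {D : Finset ℕ} (ha : a ∣ n)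
    (hD : ∀ d ∈ D, a ∣ d) {x y : ZMod n} (hxy : (circulant n D).Adj x y) :
    x.val ≡ y.val [MOD a] := by
  obtain ⟨-, hxy | hyx⟩ := (fromRel_adj _ _ _).mp hxy
  · exact ZMod.val_modEq_of_dvd_val_sub ha (hD _ hxy)
  · exact (ZMod.val_modEq_of_dvd_val_sub ha (hD _ hyx)).symm

theorem dvd_of_mem_pairedD {n a b d : ℕ} (hd : d ∈ pairedD n a b) : a ∣ d :=
  (Finset.mem_filter.mp hd).2.1

theorem stmt_11_general (n a1 b1 a2 b2 : ℕ) (hn : 0 < n)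
    (h1 : a1 * b1 ∣ n) (h2 : a2 * b2 ∣ n)
    (C : Set (ZMod n))
    (hC : (circulant n (pairedD n a1 b1 ∪ pairedD n a2 b2)).IsClique C) :
    (∀ i ∈ C, ∀ j ∈ C, i.val ≡ j.val [MOD a1]) ∨
    (∀ i ∈ C, ∀ j ∈ C, i.val ≡ j.val [MOD a2]) := by
  have : NeZero n := ⟨hn.ne'⟩
  have modEq_equivalence (a : ℕ) : Equivalence fun i j : ZMod n => i.val ≡ j.val [MOD a] :=
    Equivalence.comap ⟨Nat.ModEq.refl, Nat.ModEq.symm, Nat.ModEq.trans⟩ ZMod.val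
  refine (modEq_equivalence a1).forall_or_forall_of_forall_or (modEq_equivalence a2) ?_
  intro i hi j hj
  rcases eq_or_ne i j with rfl | hij
  · exact Or.inl rfl
  have hadj := hC hi hj hij
  rw [circulant_union, sup_adj] at hadj
  exact hadj.imp
    (val_modEq_of_circulant_adj ((dvd_mul_right a1 b1).trans h1) fun _ => dvd_of_mem_pairedD)
    (val_modEq_of_circulant_adj ((dvd_mul_right a2 b2).trans h2) fun _ => dvd_of_mem_pairedD)

/-- Every clique of a 2-paired circulant `C(n; a₁,b₁; a₂,b₂)` is an
`a₁`-clique or an `a₂`-clique. -/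
theorem stmt_11 (n a1 b1 a2 b2 : ℕ) (hn : 0 < n)
    (ha1 : 0 < a1) (hb1 : 0 < b1) (ha2 : 0 < a2) (hb2 : 0 < b2)
    (h1 : a1 * b1 ∣ n) (h2 : a2 * b2 ∣ n)
    (C : Set (ZMod n))
    (hC : (circulant n (pairedD n a1 b1 ∪ pairedD n a2 b2)).IsClique C) :
    (∀ i ∈ C, ∀ j ∈ C, i.val ≡ j.val [MOD a1]) ∨
    (∀ i ∈ C, ∀ j ∈ C, i.val ≡ j.val [MOD a2]) :=
  stmt_11_general n a1 b1 a2 b2 hn h1 h2 C hC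
end

section
/- Let G = C(n; a_1,b_1; a_2,b_2) be a 2-paired circulant with n = lcm(a_1·b_1, a_2·b_2). Then every inclusion-maximal stable set S of G satisfies |S| ≤ a_1·a_2. -/
open SimpleGraph Finset

/-! Reducing a vertex modulo every `a i` is injective on a stable set: two distinct stable vertices
with the same residues differ by some `0 < d < n` divisible by every `a i`; as `d` is not a distance
of the graph, every `a i * b i` divides `d`, hence so does their lcm `n`, which is absurd. So a
stable set has at most `∏ i, a i` vertices. -/

lemma circulant.val_sub_notMem_of_isClique_compl {n : ℕ} {D : Finset ℕ} {S : Set (ZMod n)}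
    (hS : (circulant n D)ᶜ.IsClique S) {x y : ZMod n} (hx : x ∈ S) (hy : y ∈ S) (hxy : x ≠ y) :
    (x - y).val ∉ D := fun hD =>
  ((compl_adj _ _ _).1 (hS hx hy hxy)).2 ((fromRel_adj _ _ _).2 ⟨hxy, Or.inl hD⟩)

lemma mul_dvd_of_notMem_pairedD {n a b d : ℕ} (hd : d ≠ 0) (hdn : d < n) (had : a ∣ d)
    (hD : d ∉ pairedD n a b) : a * b ∣ d := by
  by_contra hab
  exact hD (mem_filter.2 ⟨mem_Icc.2 ⟨Nat.one_le_iff_ne_zero.2 hd, Nat.le_sub_one_of_lt hdn⟩, had, hab⟩)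

lemma ZMod.dvd_val_sub_of_cast_eq {m n : ℕ} [NeZero n] (hmn : m ∣ n) {x y : ZMod n}
    (h : (x.cast : ZMod m) = y.cast) : m ∣ (x - y).val := by
  rw [← ZMod.natCast_eq_zero_iff, ← ZMod.cast_eq_val, ZMod.cast_sub hmn, h, sub_self]

section pairedCirculant

variable {ι : Type*} [Fintype ι] {n : ℕ} [NeZero n] {a b : ι → ℕ}

def pairedResidues (a : ι → ℕ) (x : ZMod n) (i : ι) : ZMod (a i) := x.cast

lemma pairedCirculant.injOn_pairedResidues (hlcm : n = univ.lcm fun i => a i * b i)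
    {S : Set (ZMod n)} (hS : (pairedCirculant n a b)ᶜ.IsClique S) :
    Set.InjOn (pairedResidues a) S := by
  intro x hx y hy hxy
  by_contra hne
  set d := (x - y).val
  have hd : d ≠ 0 := by simpa [d, sub_eq_zero] using hne
  have hdD := circulant.val_sub_notMem_of_isClique_compl hS hx hy hne
  have hab : ∀ i, a i * b i ∣ d := fun i => by
    have hin : a i * b i ∣ n := hlcm ▸ dvd_lcm (mem_univ i)
    refine mul_dvd_of_notMem_pairedD hd (ZMod.val_lt _)
      (ZMod.dvd_val_sub_of_cast_eq (dvd_of_mul_right_dvd hin) (congrFun hxy i)) ?_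
    exact fun h => hdD (mem_biUnion.2 ⟨i, mem_univ i, h⟩)
  exact hd (Nat.eq_zero_of_dvd_of_lt (hlcm ▸ Finset.lcm_dvd fun i _ => hab i) (ZMod.val_lt _))

theorem pairedCirculant.ncard_le_prod_of_isClique_compl (hlcm : n = univ.lcm fun i => a i * b i)
    {S : Set (ZMod n)} (hS : (pairedCirculant n a b)ᶜ.IsClique S) : S.ncard ≤ ∏ i, a i := by
  have : ∀ i, NeZero (a i) := fun i => by
    have hin : a i * b i ∣ n := hlcm ▸ dvd_lcm (mem_univ i)
    exact ⟨fun h => NeZero.ne n (Nat.eq_zero_of_zero_dvd (by simpa [h] using hin))⟩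
  calc S.ncard ≤ (Set.univ : Set (∀ i, ZMod (a i))).ncard :=
        Set.ncard_le_ncard_of_injOn _ (fun _ _ => Set.mem_univ _)
          (pairedCirculant.injOn_pairedResidues hlcm hS) Set.finite_univ
    _ = ∏ i, a i := by simp [Set.ncard_univ, Nat.card_pi]

end pairedCirculant

lemma pairedCirculant_fin_two (n a1 b1 a2 b2 : ℕ) :
    pairedCirculant n ![a1, a2] ![b1, b2] = circulant n (pairedD n a1 b1 ∪ pairedD n a2 b2) := by
  simp [pairedCirculant, Fin.univ_succ]

theorem stmt_14_general (n a1 b1 a2 b2 : ℕ) (hn : 0 < n)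
    (hlcm : n = Nat.lcm (a1 * b1) (a2 * b2))
    (S : Set (ZMod n))
    (hS : Maximal (circulant n (pairedD n a1 b1 ∪ pairedD n a2 b2))ᶜ.IsClique S) :
    S.ncard ≤ a1 * a2 := by
  have : NeZero n := ⟨hn.ne'⟩
  have hlcm' : n = univ.lcm fun i => ![a1, a2] i * ![b1, b2] i := by
    simpa [Fin.univ_succ, lcm_eq_nat_lcm] using hlcm
  have hstable := hS.1
  rw [← pairedCirculant_fin_two] at hstable
  simpa using pairedCirculant.ncard_le_prod_of_isClique_compl hlcm' hstable

/-- In a 2-paired circulant with `n = lcm(a₁b₁, a₂b₂)`, every maximal stable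
set `S` satisfies `|S| ≤ a₁a₂`. -/
theorem stmt_14 (n a1 b1 a2 b2 : ℕ) (hn : 0 < n)
    (ha1 : 0 < a1) (hb1 : 0 < b1) (ha2 : 0 < a2) (hb2 : 0 < b2)
    (h1 : a1 * b1 ∣ n) (h2 : a2 * b2 ∣ n)
    (hlcm : n = Nat.lcm (a1 * b1) (a2 * b2))
    (S : Set (ZMod n))
    (hS : Maximal (circulant n (pairedD n a1 b1 ∪ pairedD n a2 b2))ᶜ.IsClique S) :
    S.ncard ≤ a1 * a2 :=
  stmt_14_general n a1 b1 a2 b2 hn hlcm S hS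
end

section
/- Let G = C(n; a_1,b_1; a_2,b_2) be a 2-paired circulant with n = lcm(a_1·b_1, a_2·b_2). If gcd(a_1·b_1, a_2·b_2) = 1, then every inclusion-maximal stable set S of G satisfies |S| = a_1·a_2. -/
open SimpleGraph Finset

/-!
Write `mᵢ = aᵢ bᵢ`. By the Chinese remainder theorem `ZMod n ≃ ZMod m₁ × ZMod m₂`, and two
distinct vertices are non-adjacent exactly when, for each `i`, agreeing modulo `aᵢ` forces them
to agree modulo `mᵢ`. Hence on a stable set `S` reduction modulo `(a₁, a₂)` is injective. It is
also surjective when `S` is maximal: for a missing pair `(u₁, u₂)`, choose for each `i` the residue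
modulo `mᵢ` over `uᵢ` already used by `S` (any one if there is none); the vertex with these
residues is non-adjacent to all of `S`. So `|S| = a₁ a₂`.
-/

theorem Set.InjOn.exists_forall_mem_fiber_eq {X A : Type*} {p : X → A} {T : Set X}
    (hT : T.InjOn p) (hp : Function.Surjective p) (u : A) :
    ∃ r, p r = u ∧ ∀ x ∈ T, p x = u → x = r := by
  by_cases hu : ∃ x ∈ T, p x = u
  · obtain ⟨x₀, hx₀, rfl⟩ := hu
    exact ⟨x₀, rfl, fun x hx hpx => hT hx hx₀ hpx⟩
  · obtain ⟨r, rfl⟩ := hp u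
    exact ⟨r, rfl, fun x hx hpx => absurd ⟨x, hx, hpx⟩ hu⟩

section FiberCompatible

variable {V X₁ X₂ A₁ A₂ : Type*} (p₁ : X₁ → A₁) (p₂ : X₂ → A₂)

def FiberCompatible (x y : X₁ × X₂) : Prop :=
  (p₁ x.1 = p₁ y.1 → x.1 = y.1) ∧ (p₂ x.2 = p₂ y.2 → x.2 = y.2)

variable {p₁ p₂} {H : SimpleGraph V} {e : V ≃ X₁ × X₂} {S : Set V}

theorem fiberCompatible_of_isClique
    (hH : ∀ x y, x ≠ y → (H.Adj x y ↔ FiberCompatible p₁ p₂ (e x) (e y)))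
    (hS : H.IsClique S) {s t : V} (hs : s ∈ S) (ht : t ∈ S) :
    FiberCompatible p₁ p₂ (e s) (e t) := by
  obtain rfl | hst := eq_or_ne s t
  · exact ⟨fun _ => rfl, fun _ => rfl⟩
  · exact (hH s t hst).1 (hS hs ht hst)

theorem injOn_of_isClique
    (hH : ∀ x y, x ≠ y → (H.Adj x y ↔ FiberCompatible p₁ p₂ (e x) (e y)))
    (hS : H.IsClique S) : S.InjOn (Prod.map p₁ p₂ ∘ e) := by
  intro s hs t ht hst
  obtain ⟨h₁, h₂⟩ := Prod.ext_iff.1 hst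
  obtain ⟨hc₁, hc₂⟩ := fiberCompatible_of_isClique hH hS hs ht
  exact e.injective (Prod.ext (hc₁ h₁) (hc₂ h₂))

theorem surjOn_of_maximal_isClique
    (hH : ∀ x y, x ≠ y → (H.Adj x y ↔ FiberCompatible p₁ p₂ (e x) (e y)))
    (hp₁ : Function.Surjective p₁) (hp₂ : Function.Surjective p₂)
    (hS : Maximal H.IsClique S) : S.SurjOn (Prod.map p₁ p₂ ∘ e) Set.univ := by
  rintro ⟨u₁, u₂⟩ -
  by_contra hu
  have hinj₁ : ((fun s => (e s).1) '' S).InjOn p₁ := by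
    rintro _ ⟨s, hs, rfl⟩ _ ⟨t, ht, rfl⟩ h
    exact (fiberCompatible_of_isClique hH hS.1 hs ht).1 h
  have hinj₂ : ((fun s => (e s).2) '' S).InjOn p₂ := by
    rintro _ ⟨s, hs, rfl⟩ _ ⟨t, ht, rfl⟩ h
    exact (fiberCompatible_of_isClique hH hS.1 hs ht).2 h
  obtain ⟨r₁, rfl, hr₁⟩ := hinj₁.exists_forall_mem_fiber_eq hp₁ u₁
  obtain ⟨r₂, rfl, hr₂⟩ := hinj₂.exists_forall_mem_fiber_eq hp₂ u₂
  set z := e.symm (r₁, r₂)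
  have hz : z ∉ S := fun hz => hu ⟨z, hz, by simp [z]⟩
  refine hz (hS.mem_of_prop_insert (SimpleGraph.isClique_insert.2 ⟨hS.1, fun s hs hzs => ?_⟩))
  refine (hH z s hzs).2 ⟨fun h => ?_, fun h => ?_⟩
  · simp only [z, Equiv.apply_symm_apply] at h ⊢
    exact (hr₁ _ (Set.mem_image_of_mem _ hs) h.symm).symm
  · simp only [z, Equiv.apply_symm_apply] at h ⊢
    exact (hr₂ _ (Set.mem_image_of_mem _ hs) h.symm).symm

theorem ncard_eq_of_maximal_isClique
    (hH : ∀ x y, x ≠ y → (H.Adj x y ↔ FiberCompatible p₁ p₂ (e x) (e y)))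
    (hp₁ : Function.Surjective p₁) (hp₂ : Function.Surjective p₂)
    (hS : Maximal H.IsClique S) : S.ncard = Nat.card A₁ * Nat.card A₂ := by
  rw [(Set.BijOn.mk (Set.mapsTo_univ _ _) (injOn_of_isClique hH hS.1)
    (surjOn_of_maximal_isClique hH hp₁ hp₂ hS)).ncard_eq, Set.ncard_univ, Nat.card_prod]

end FiberCompatible

theorem ZMod.cast_cast_of_dvd {k m n : ℕ} (hkm : k ∣ m) (hmn : m ∣ n) (x : ZMod n) :
    (cast (cast x : ZMod m) : ZMod k) = cast x :=
  RingHom.congr_fun (ZMod.castHom_comp hkm hmn) x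

theorem ZMod.cast_eq_cast_iff_dvd_val_sub {m n : ℕ} [NeZero n] (h : m ∣ n) (x y : ZMod n) :
    (cast x : ZMod m) = cast y ↔ m ∣ (x - y).val := by
  rw [← ZMod.natCast_eq_zero_iff, ZMod.natCast_val, ZMod.cast_sub h, sub_eq_zero]

theorem ZMod.chineseRemainder_apply {m n : ℕ} (h : m.Coprime n) (x : ZMod (m * n)) :
    ZMod.chineseRemainder h x = (cast x, cast x) :=
  Prod.ext (Prod.fst_zmod_cast x) (Prod.snd_zmod_cast x)

theorem sub_val_mem_pairedD_iff {n a b : ℕ} [NeZero n] (hab : a * b ∣ n) {x y : ZMod n}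
    (hxy : x ≠ y) :
    (x - y).val ∈ pairedD n a b ↔
      (ZMod.cast x : ZMod a) = ZMod.cast y ∧ (ZMod.cast x : ZMod (a * b)) ≠ ZMod.cast y := by
  have hval : (x - y).val ∈ Finset.Icc 1 (n - 1) :=
    Finset.mem_Icc.2 ⟨Nat.one_le_iff_ne_zero.2 ((ZMod.val_ne_zero _).2 (sub_ne_zero.2 hxy)),
      Nat.le_sub_one_of_lt (ZMod.val_lt _)⟩
  simp only [pairedD, Finset.mem_filter, hval, true_and, ne_eq,
    ZMod.cast_eq_cast_iff_dvd_val_sub hab,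
    ZMod.cast_eq_cast_iff_dvd_val_sub ((dvd_mul_right a b).trans hab)]

theorem circulant_pairedD_union_adj_iff {n a₁ b₁ a₂ b₂ : ℕ} [NeZero n] (h₁ : a₁ * b₁ ∣ n)
    (h₂ : a₂ * b₂ ∣ n) {x y : ZMod n} :
    (circulant n (pairedD n a₁ b₁ ∪ pairedD n a₂ b₂)).Adj x y ↔ x ≠ y ∧
      ((ZMod.cast x : ZMod a₁) = ZMod.cast y ∧ (ZMod.cast x : ZMod (a₁ * b₁)) ≠ ZMod.cast y ∨
        (ZMod.cast x : ZMod a₂) = ZMod.cast y ∧ (ZMod.cast x : ZMod (a₂ * b₂)) ≠ ZMod.cast y) := by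
  simp only [circulant, SimpleGraph.fromRel_adj, Finset.mem_union]
  refine and_congr_right fun hxy => ?_
  rw [sub_val_mem_pairedD_iff h₁ hxy, sub_val_mem_pairedD_iff h₂ hxy,
    sub_val_mem_pairedD_iff h₁ hxy.symm, sub_val_mem_pairedD_iff h₂ hxy.symm]
  simp only [eq_comm (a := (ZMod.cast y : ZMod _)), ne_comm (a := (ZMod.cast y : ZMod _)), or_self]

theorem compl_circulant_pairedD_union_adj_iff {a₁ b₁ a₂ b₂ : ℕ} [NeZero (a₁ * b₁ * (a₂ * b₂))]
    (hco : (a₁ * b₁).Coprime (a₂ * b₂)) {x y : ZMod (a₁ * b₁ * (a₂ * b₂))} (hxy : x ≠ y) :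
    (circulant (a₁ * b₁ * (a₂ * b₂)) (pairedD (a₁ * b₁ * (a₂ * b₂)) a₁ b₁ ∪
      pairedD (a₁ * b₁ * (a₂ * b₂)) a₂ b₂))ᶜ.Adj x y ↔
      FiberCompatible (ZMod.castHom (dvd_mul_right a₁ b₁) (ZMod a₁))
        (ZMod.castHom (dvd_mul_right a₂ b₂) (ZMod a₂))
        (ZMod.chineseRemainder hco x) (ZMod.chineseRemainder hco y) := by
  have h₁ : a₁ * b₁ ∣ a₁ * b₁ * (a₂ * b₂) := dvd_mul_right _ _
  have h₂ : a₂ * b₂ ∣ a₁ * b₁ * (a₂ * b₂) := dvd_mul_left _ _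
  rw [SimpleGraph.compl_adj, circulant_pairedD_union_adj_iff h₁ h₂]
  simp only [FiberCompatible, ZMod.chineseRemainder_apply, ZMod.castHom_apply,
    ZMod.cast_cast_of_dvd (dvd_mul_right a₁ b₁) h₁,
    ZMod.cast_cast_of_dvd (dvd_mul_right a₂ b₂) h₂]
  tauto

theorem stmt_15_general (n a1 b1 a2 b2 : ℕ) (hn : 0 < n)
    (hlcm : n = Nat.lcm (a1 * b1) (a2 * b2))
    (hgcd : Nat.gcd (a1 * b1) (a2 * b2) = 1)
    (S : Set (ZMod n))
    (hS : Maximal (circulant n (pairedD n a1 b1 ∪ pairedD n a2 b2))ᶜ.IsClique S) :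
    S.ncard = a1 * a2 := by
  have hco : (a1 * b1).Coprime (a2 * b2) := hgcd
  obtain rfl : n = a1 * b1 * (a2 * b2) := hlcm.trans hco.lcm_eq_mul
  have : NeZero (a1 * b1 * (a2 * b2)) := ⟨hn.ne'⟩
  rw [ncard_eq_of_maximal_isClique (fun _ _ hxy => compl_circulant_pairedD_union_adj_iff hco hxy)
    (ZMod.castHom_surjective _) (ZMod.castHom_surjective _) hS, Nat.card_zmod, Nat.card_zmod]

/-- In a 2-paired circulant with `n = lcm(a₁b₁, a₂b₂)` and
`gcd(a₁b₁, a₂b₂) = 1`, every maximal stable set `S` satisfies `|S| = a₁a₂`. -/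
theorem stmt_15 (n a1 b1 a2 b2 : ℕ) (hn : 0 < n)
    (ha1 : 0 < a1) (hb1 : 0 < b1) (ha2 : 0 < a2) (hb2 : 0 < b2)
    (h1 : a1 * b1 ∣ n) (h2 : a2 * b2 ∣ n)
    (hlcm : n = Nat.lcm (a1 * b1) (a2 * b2))
    (hgcd : Nat.gcd (a1 * b1) (a2 * b2) = 1)
    (S : Set (ZMod n))
    (hS : Maximal (circulant n (pairedD n a1 b1 ∪ pairedD n a2 b2))ᶜ.IsClique S) :
    S.ncard = a1 * a2 :=
  stmt_15_general n a1 b1 a2 b2 hn hlcm hgcd S hS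
end

section
/- Every 1-paired circulant C(n; a, b) is P_4-free; that is, for all positive integers n, a, b with a·b ∣ n, the circulant C_n(D) with D = { d ∈ {1,…,n−1} : a ∣ d and a·b ∤ d } contains no induced subgraph isomorphic to the path on four vertices. -/
/-!
Adjacency in `C(n; a, b)` says exactly that two vertices agree modulo `a` but differ modulo `a * b`.
Any graph of the form "same `f`-fibre, different `h`-colour" is `P₄`-free: along a path
`v₀ v₁ v₂ v₃` all four vertices lie in one fibre, so the non-edges `v₁v₃` and `v₀v₃` force equal
colours, and then `h v₀ = h v₃ = h v₁` contradicts the edge `v₀v₁`.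
-/

open SimpleGraph Finset

theorem SimpleGraph.isEmpty_pathGraph_four_embedding_of_adj_iff {V α β : Type*}
    (G : SimpleGraph V) (f : V → α) (h : V → β)
    (hG : ∀ x y, G.Adj x y ↔ f x = f y ∧ h x ≠ h y) :
    IsEmpty (pathGraph 4 ↪g G) := by
  refine ⟨fun e => ?_⟩
  have adj (i j : Fin 4) : (pathGraph 4).Adj i j ↔ f (e i) = f (e j) ∧ h (e i) ≠ h (e j) := by
    rw [← e.map_adj_iff, hG]
  have path_adj (i j : Fin 4) (hij : (pathGraph 4).Adj i j := by rw [pathGraph_adj]; decide) :=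
    (adj i j).1 hij
  have same_colour (i j : Fin 4) (hf : f (e i) = f (e j))
      (hij : ¬ (pathGraph 4).Adj i j := by rw [pathGraph_adj]; decide) : h (e i) = h (e j) :=
    not_not.1 fun hne => hij ((adj i j).2 ⟨hf, hne⟩)
  obtain ⟨f01, h01⟩ := path_adj 0 1
  obtain ⟨f12, -⟩ := path_adj 1 2
  obtain ⟨f23, -⟩ := path_adj 2 3
  have h13 := same_colour 1 3 (f12.trans f23)
  have h03 := same_colour 0 3 (f01.trans (f12.trans f23))
  exact h01 (h03.trans h13.symm)

theorem ZMod.castHom_eq_castHom_iff_dvd_val_sub {n m : ℕ} [NeZero n] (hm : m ∣ n) (x y : ZMod n) :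
    ZMod.castHom hm (ZMod m) x = ZMod.castHom hm (ZMod m) y ↔ m ∣ (x - y).val := by
  rw [← sub_eq_zero, ← map_sub, ZMod.castHom_apply, ZMod.cast_eq_val, ZMod.natCast_eq_zero_iff]

theorem circulant_pairedD_adj_iff {n a b : ℕ} [NeZero n] (hab : a * b ∣ n) (x y : ZMod n) :
    (circulant n (pairedD n a b)).Adj x y ↔
      ZMod.castHom (dvd_of_mul_right_dvd hab) (ZMod a) x =
          ZMod.castHom (dvd_of_mul_right_dvd hab) (ZMod a) y ∧
        ZMod.castHom hab (ZMod (a * b)) x ≠ ZMod.castHom hab (ZMod (a * b)) y := by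
  have mem_pairedD {u v : ZMod n} (huv : u ≠ v) : (u - v).val ∈ pairedD n a b ↔
      ZMod.castHom (dvd_of_mul_right_dvd hab) (ZMod a) u =
          ZMod.castHom (dvd_of_mul_right_dvd hab) (ZMod a) v ∧
        ZMod.castHom hab (ZMod (a * b)) u ≠ ZMod.castHom hab (ZMod (a * b)) v := by
    have hpos : 1 ≤ (u - v).val := ZMod.val_pos.2 (sub_ne_zero.2 huv)
    have hle : (u - v).val ≤ n - 1 := Nat.le_sub_one_of_lt (ZMod.val_lt _)
    simp only [ne_eq, ZMod.castHom_eq_castHom_iff_dvd_val_sub]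
    simp [pairedD, hpos, hle]
  rw [circulant, fromRel_adj]
  constructor
  · rintro ⟨hxy, hD | hD⟩
    · exact (mem_pairedD hxy).1 hD
    · obtain ⟨hmod, hne⟩ := (mem_pairedD hxy.symm).1 hD
      exact ⟨hmod.symm, hne.symm⟩
  · intro hD
    have hxy : x ≠ y := fun hxy => hD.2 (congrArg _ hxy)
    exact ⟨hxy, Or.inl ((mem_pairedD hxy).2 hD)⟩

theorem stmt_17_general (n a b : ℕ) (hn : 0 < n) (hab : a * b ∣ n) :
    IsEmpty (SimpleGraph.pathGraph 4 ↪g circulant n (pairedD n a b)) :=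
  have : NeZero n := ⟨hn.ne'⟩
  isEmpty_pathGraph_four_embedding_of_adj_iff _ _ _ (circulant_pairedD_adj_iff hab)

/-- Every 1-paired circulant `C(n; a, b)` is `P₄`-free. -/
theorem stmt_17 (n a b : ℕ) (hn : 0 < n) (ha : 0 < a) (hb : 0 < b) (hab : a * b ∣ n) :
    IsEmpty (SimpleGraph.pathGraph 4 ↪g circulant n (pairedD n a b)) :=
  stmt_17_general n a b hn hab
end

section
/- For every nonnegative integer k, there exists a P_4-free circulant that is not k-paired; that is, there exist a positive integer n and a set D ⊆ {1,…,n−1} with d ∈ D ⇔ n−d ∈ D such that the circulant C_n(D) contains no induced subgraph isomorphic to the path on four vertices, and there do not exist positive integers a_1,b_1,…,a_k,b_k with a_i·b_i ∣ n for all i ∈ [k] and D = ⋃_{i=1}^k { d ∈ {1,…,n−1} : a_i ∣ d and a_i·b_i ∤ d }. -/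
/-!
Take `n = 2 ^ (2k+2)` and let `D` be the set of `d` whose `2`-adic valuation is even. Sending
`x : ZMod n` to `x.val : ℚ` embeds `C_n(D)` as an induced subgraph of the graph on `ℚ` in which
`q ~ r` iff `v₂(q - r)` is even. That graph has no induced `P₄`, because every triangle is
isosceles for `v₂`: along an induced path `a - b - c - d` the three edges have the same
valuation `e`, `v₂(a - c) > e`, and then `v₂(a - d) = v₂(c - d) = e`, so `a ~ d`.

The circulant is not `k`-paired by pigeonhole: two of the `k + 1` distances `2^0, 2^2, …, 2^(2k)`
would lie in the same `pairedD n a b`, and that set is convex for divisibility, so it would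
also contain the next power `2^(2j+1)`, whose valuation is odd.
-/

open SimpleGraph Finset

theorem padicValInt_neg (p : ℕ) (z : ℤ) : padicValInt p (-z) = padicValInt p z := by
  simp [padicValInt]

theorem padicValInt_le_of_modEq {p m : ℕ} [Fact p.Prime] {a b : ℤ}
    (h : a ≡ b [ZMOD (p : ℤ) ^ m]) (ha : ¬ (p : ℤ) ^ m ∣ a) :
    padicValInt p a ≤ padicValInt p b := by
  have ha' : a ≠ 0 ∧ padicValInt p a < m := by
    rwa [padicValInt_dvd_iff, not_or, not_le] at ha
  have hb : (p : ℤ) ^ padicValInt p a ∣ b :=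
    ((h.of_dvd (pow_dvd_pow _ ha'.2.le)).dvd_iff).mp (padicValInt_dvd a)
  have hb0 : b ≠ 0 := by
    rintro rfl
    exact ha (h.dvd_iff.mpr (dvd_zero _))
  exact ((padicValInt_dvd_iff _ b).mp hb).resolve_left hb0

theorem padicValInt_eq_of_modEq {p m : ℕ} [Fact p.Prime] {a b : ℤ}
    (h : a ≡ b [ZMOD (p : ℤ) ^ m]) (hb : ¬ (p : ℤ) ^ m ∣ b) :
    padicValInt p a = padicValInt p b :=
  le_antisymm (padicValInt_le_of_modEq h (h.dvd_iff.not.mpr hb))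
    (padicValInt_le_of_modEq h.symm hb)

theorem padicValRat_eq_and_lt_add_of_pred_of_not_pred {p : ℕ} [Fact p.Prime] {P : ℤ → Prop}
    {q r : ℚ} (hq : q ≠ 0) (hr : r ≠ 0) (hqr : q + r ≠ 0) (hPq : P (padicValRat p q))
    (hPr : P (padicValRat p r)) (hPqr : ¬ P (padicValRat p (q + r))) :
    padicValRat p q = padicValRat p r ∧ padicValRat p q < padicValRat p (q + r) := by
  have heq : padicValRat p q = padicValRat p r := by
    by_contra hne
    rw [padicValRat.add_eq_min hqr hq hr hne] at hPqr
    rcases min_choice (padicValRat p q) (padicValRat p r) with h | h <;> rw [h] at hPqr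
    exacts [hPqr hPq, hPqr hPr]
  refine ⟨heq, lt_of_le_of_ne ?_ fun h => hPqr (h ▸ hPq)⟩
  simpa [heq] using padicValRat.min_le_padicValRat_add (p := p) hqr

def padicValGraph (p : ℕ) (P : ℤ → Prop) : SimpleGraph ℚ where
  Adj q r := q ≠ r ∧ P (padicValRat p (q - r))
  symm := ⟨fun q r h => ⟨h.1.symm, by rw [← neg_sub, padicValRat.neg]; exact h.2⟩⟩
  loopless := ⟨fun q h => h.1 rfl⟩

@[simp]
theorem padicValGraph_adj {p : ℕ} {P : ℤ → Prop} {q r : ℚ} :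
    (padicValGraph p P).Adj q r ↔ q ≠ r ∧ P (padicValRat p (q - r)) :=
  Iff.rfl

namespace padicValGraph

variable {p : ℕ} [Fact p.Prime] {P : ℤ → Prop}

theorem padicValRat_eq_and_lt_of_not_adj {u v w : ℚ} (huv : (padicValGraph p P).Adj u v)
    (hvw : (padicValGraph p P).Adj v w) (huw : u ≠ w) (hn : ¬ (padicValGraph p P).Adj u w) :
    padicValRat p (u - v) = padicValRat p (v - w) ∧
      padicValRat p (u - v) < padicValRat p (u - w) := by
  rw [padicValGraph_adj] at huv hvw hn
  have hsum : u - v + (v - w) = u - w := by ring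
  have := padicValRat_eq_and_lt_add_of_pred_of_not_pred (sub_ne_zero.mpr huv.1)
    (sub_ne_zero.mpr hvw.1) (hsum ▸ sub_ne_zero.mpr huw) huv.2 hvw.2
    (hsum ▸ fun h => hn ⟨huw, h⟩)
  rwa [hsum] at this

theorem isEmpty_pathGraph_four_embedding : IsEmpty (pathGraph 4 ↪g padicValGraph p P) := by
  refine ⟨fun f => ?_⟩
  have adj : ∀ i j : Fin 4, i.val + 1 = j.val → (padicValGraph p P).Adj (f i) (f j) :=
    fun i j h => f.map_adj_iff.mpr (pathGraph_adj.mpr (Or.inl h))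
  have not_adj : ∀ i j : Fin 4, i.val + 1 < j.val → ¬ (padicValGraph p P).Adj (f i) (f j) :=
    fun i j h => by rw [f.map_adj_iff, pathGraph_adj]; omega
  have ne : ∀ i j : Fin 4, i.val < j.val → f i ≠ f j :=
    fun i j h => f.injective.ne (Fin.ne_of_lt h)
  obtain ⟨h01, h02⟩ := padicValRat_eq_and_lt_of_not_adj (adj 0 1 rfl) (adj 1 2 rfl)
    (ne 0 2 (by decide)) (not_adj 0 2 (by decide))
  obtain ⟨h12, -⟩ := padicValRat_eq_and_lt_of_not_adj (adj 1 2 rfl) (adj 2 3 rfl)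
    (ne 1 3 (by decide)) (not_adj 1 3 (by decide))
  have h23 := adj 2 3 rfl
  rw [padicValGraph_adj] at h23
  have hsum : f 2 - f 3 + (f 0 - f 2) = f 0 - f 3 := by ring
  have h03 : padicValRat p (f 0 - f 3) = padicValRat p (f 2 - f 3) := by
    rw [← hsum]
    exact padicValRat.add_eq_of_lt (hsum ▸ sub_ne_zero.mpr (ne 0 3 (by decide)))
      (sub_ne_zero.mpr h23.1) (sub_ne_zero.mpr (ne 0 2 (by decide))) (by omega)
  exact not_adj 0 3 (by decide) ⟨ne 0 3 (by decide), h03 ▸ h23.2⟩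

end padicValGraph

def padicValDistSet (p m : ℕ) (P : ℤ → Prop) [DecidablePred P] : Finset ℕ :=
  (Icc 1 (p ^ m - 1)).filter (fun d => P (padicValNat p d))

section padicValDistSet

variable {p m : ℕ} [Fact p.Prime] {P : ℤ → Prop} [DecidablePred P]

theorem mem_padicValDistSet {d : ℕ} :
    d ∈ padicValDistSet p m P ↔ (0 < d ∧ d < p ^ m) ∧ P (padicValNat p d) := by
  have : 0 < p ^ m := pow_pos (Fact.out : p.Prime).pos m
  simp only [padicValDistSet, mem_filter, mem_Icc, Nat.le_sub_one_iff_lt this,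
    Nat.one_le_iff_ne_zero, Nat.pos_iff_ne_zero]

theorem pow_mem_padicValDistSet_iff {j : ℕ} :
    p ^ j ∈ padicValDistSet p m P ↔ j < m ∧ P j := by
  have hp : 1 < p := (Fact.out : p.Prime).one_lt
  rw [mem_padicValDistSet, padicValNat.prime_pow, Nat.pow_lt_pow_iff_right hp]
  simp [pow_pos (zero_lt_one.trans hp)]

theorem sub_mem_padicValDistSet {d : ℕ} (hd : d ∈ padicValDistSet p m P) :
    p ^ m - d ∈ padicValDistSet p m P := by
  obtain ⟨⟨hd0, hdm⟩, hP⟩ := mem_padicValDistSet.mp hd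
  have hmod : ((p ^ m - d : ℕ) : ℤ) ≡ -d [ZMOD (p : ℤ) ^ m] :=
    Int.modEq_iff_dvd.mpr ⟨-1, by push_cast [hdm.le]; ring⟩
  have hndvd : ¬ (p : ℤ) ^ m ∣ -d := by
    rw [Int.dvd_neg]; exact_mod_cast Nat.not_dvd_of_pos_of_lt hd0 hdm
  have := padicValInt_eq_of_modEq hmod hndvd
  rw [padicValInt.of_nat, padicValInt_neg, padicValInt.of_nat] at this
  exact mem_padicValDistSet.mpr ⟨⟨by omega, by omega⟩, this ▸ hP⟩

theorem val_mem_padicValDistSet_iff {z : ZMod (p ^ m)} {t : ℤ} (hz : z ≠ 0)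
    (ht : (t : ZMod (p ^ m)) = z) : z.val ∈ padicValDistSet p m P ↔ P (padicValInt p t) := by
  have hz0 : 0 < z.val := Nat.pos_of_ne_zero ((ZMod.val_ne_zero z).mpr hz)
  have hmod : t ≡ z.val [ZMOD (p : ℤ) ^ m] := by
    have := (ZMod.intCast_eq_intCast_iff t z.val (p ^ m)).mp (by rw [ht]; simp)
    exact_mod_cast this
  have hndvd : ¬ (p : ℤ) ^ m ∣ z.val := by
    exact_mod_cast Nat.not_dvd_of_pos_of_lt hz0 (ZMod.val_lt z)
  rw [padicValInt_eq_of_modEq hmod hndvd, padicValInt.of_nat, mem_padicValDistSet]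
  simp [hz0, ZMod.val_lt z]

end padicValDistSet

section circulant

variable {p m : ℕ} [Fact p.Prime] {P : ℤ → Prop} [DecidablePred P]

theorem circulant_padicValDistSet_adj_iff {x y : ZMod (p ^ m)} :
    (circulant (p ^ m) (padicValDistSet p m P)).Adj x y ↔
      (padicValGraph p P).Adj (x.val : ℚ) (y.val : ℚ) := by
  have hcast : (((x.val : ℤ) - y.val : ℤ) : ZMod (p ^ m)) = x - y := by simp
  have hcast' : ((-((x.val : ℤ) - y.val) : ℤ) : ZMod (p ^ m)) = y - x := by simp
  rw [circulant, fromRel_adj, padicValGraph_adj, Ne, Ne, Nat.cast_inj,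
    (ZMod.val_injective _).eq_iff]
  refine and_congr_right fun hxy => ?_
  rw [val_mem_padicValDistSet_iff (sub_ne_zero.mpr hxy) hcast,
    val_mem_padicValDistSet_iff (sub_ne_zero.mpr (Ne.symm hxy)) hcast', padicValInt_neg,
    or_self, ← padicValRat.of_int]
  norm_cast

def circulantPadicValDistSetEmbedding (p m : ℕ) [Fact p.Prime] (P : ℤ → Prop)
    [DecidablePred P] :
    circulant (p ^ m) (padicValDistSet p m P) ↪g padicValGraph p P where
  toFun x := x.val
  inj' := Nat.cast_injective.comp (ZMod.val_injective _)
  map_rel_iff' := circulant_padicValDistSet_adj_iff.symm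

theorem isEmpty_pathGraph_four_embedding_circulant_padicValDistSet :
    IsEmpty (pathGraph 4 ↪g circulant (p ^ m) (padicValDistSet p m P)) :=
  ⟨fun f => padicValGraph.isEmpty_pathGraph_four_embedding.false
    ((circulantPadicValDistSetEmbedding p m P).comp f)⟩

end circulant

theorem mem_pairedD_of_dvd_of_dvd {n a b d e f : ℕ} (hd : d ∈ pairedD n a b)
    (hf : f ∈ pairedD n a b) (hde : d ∣ e) (hef : e ∣ f) : e ∈ pairedD n a b := by
  simp only [pairedD, mem_filter, mem_Icc] at hd hf ⊢
  have hf0 : 0 < f := hf.1.1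
  exact ⟨⟨Nat.pos_of_dvd_of_pos hef hf0, (Nat.le_of_dvd hf0 hef).trans hf.1.2⟩,
    hd.2.1.trans hde, fun h => hf.2.2 (h.trans hef)⟩

theorem padicValDistSet_even_ne_biUnion_pairedD (p k : ℕ) [Fact p.Prime] (a b : Fin k → ℕ) :
    padicValDistSet p (2 * k + 2) Even ≠
      univ.biUnion (fun i => pairedD (p ^ (2 * k + 2)) (a i) (b i)) := by
  intro hD
  have hmem : ∀ j : Fin (k + 1),
      ∃ i, p ^ (2 * j.val) ∈ pairedD (p ^ (2 * k + 2)) (a i) (b i) := by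
    intro j
    have : p ^ (2 * j.val) ∈ padicValDistSet p (2 * k + 2) Even :=
      pow_mem_padicValDistSet_iff.mpr ⟨by omega, by push_cast; exact even_two_mul _⟩
    simpa [hD] using this
  choose g hg using hmem
  have hlt : ∀ j l : Fin (k + 1), j < l → g j ≠ g l := by
    intro j l hjl hgl
    have hodd : p ^ (2 * j.val + 1) ∈ pairedD (p ^ (2 * k + 2)) (a (g j)) (b (g j)) :=
      mem_pairedD_of_dvd_of_dvd (hg j) (hgl ▸ hg l) (pow_dvd_pow p (by omega))
        (pow_dvd_pow p (by omega))
    have : p ^ (2 * j.val + 1) ∈ padicValDistSet p (2 * k + 2) Even :=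
      hD ▸ mem_biUnion.mpr ⟨g j, mem_univ _, hodd⟩
    have := (pow_mem_padicValDistSet_iff.mp this).2
    push_cast at this
    exact Int.not_even_two_mul_add_one _ this
  have hinj : Function.Injective g := fun j l h => by
    by_contra hne
    rcases lt_or_gt_of_ne hne with h' | h'
    exacts [hlt j l h' h, hlt l j h' h.symm]
  simpa using Fintype.card_le_of_injective g hinj

/-- For every `k` there is a `P₄`-free circulant that is not `k`-paired. -/
theorem stmt_19 (k : ℕ) :
    ∃ (n : ℕ) (D : Finset ℕ), 0 < n ∧ D ⊆ Finset.Icc 1 (n - 1) ∧ (∀ d ∈ D, n - d ∈ D) ∧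
      IsEmpty (SimpleGraph.pathGraph 4 ↪g circulant n D) ∧
      ¬ ∃ a b : Fin k → ℕ, (∀ i, 0 < a i) ∧ (∀ i, 0 < b i) ∧ (∀ i, a i * b i ∣ n) ∧
          D = Finset.univ.biUnion (fun i => pairedD n (a i) (b i)) := by
  refine ⟨2 ^ (2 * k + 2), padicValDistSet 2 (2 * k + 2) Even, by positivity, filter_subset _ _,
    fun d => sub_mem_padicValDistSet, isEmpty_pathGraph_four_embedding_circulant_padicValDistSet, ?_⟩
  rintro ⟨a, b, -, -, -, hD⟩
  exact padicValDistSet_even_ne_biUnion_pairedD 2 k a b hD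
end
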